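/- arXiv:1406.4777 — 4 statements merged into one kernel-verified Lean document; each statement's English description precedes it below -/
import Mathlib

section
/- Let n ≤ p. For Lebesgue-almost every real n×p matrix X, the p×p matrix XᵀX is positive semidefinite of rank n and every n×n principal submatrix of XᵀX is nonsingular; that is, XᵀX is in general position for almost every X. -/
open Matrix MeasureTheory

/-- Two matrices match on a graph `G`: equal diagonals and equal entries on all edges. -/
def MatchOn {V : Type*} (G : SimpleGraph V) (A B : Matrix V V ℝ) : Prop :=
  (∀ i, A i i = B i i) ∧ ∀ i j, G.Adj i j → A i j = B i j

/-- A real symmetric positive semidefinite matrix of rank `d` is in general position if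
every `d × d` principal submatrix is nonsingular. -/
def InGenPos {V : Type*} [Fintype V] [DecidableEq V] (A : Matrix V V ℝ) (d : ℕ) : Prop :=
  A.PosSemidef ∧ A.rank = d ∧
    ∀ α : Finset V, α.card = d →
      (A.submatrix (fun i : α => (i : V)) (fun i : α => (i : V))).det ≠ 0

/-- The defining property of the Gaussian rank at level `r`. -/
def GRankProp {V : Type*} [Fintype V] [DecidableEq V] (G : SimpleGraph V) (r : ℕ) : Prop :=
  ∀ A : Matrix V V ℝ, InGenPos A r → ∃ P : Matrix V V ℝ, P.PosDef ∧ MatchOn G P A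

/-- The Gaussian rank of a graph. -/
noncomputable def gaussianRank {V : Type*} [Fintype V] [DecidableEq V]
    (G : SimpleGraph V) : ℕ :=
  sInf {r : ℕ | 0 < r ∧ GRankProp G r}

/-- Vertex connectivity: the least size of a vertex set whose deletion disconnects the
graph or leaves at most one vertex. -/
noncomputable def vertexConn {V : Type*} (G : SimpleGraph V) : ℕ :=
  sInf {k : ℕ | ∃ S : Set V, S.ncard = k ∧
    (¬ (G.induce Sᶜ).Connected ∨ Sᶜ.ncard ≤ 1)}

/-- Subgraph connectivity number: the maximum vertex connectivity over all subgraphs. -/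
noncomputable def subgraphConn {V : Type*} (G : SimpleGraph V) : ℕ :=
  sSup {k : ℕ | ∃ H : G.Subgraph, vertexConn H.coe = k}

/-- Minimum degree of a graph. -/
noncomputable def minDeg {V : Type*} (G : SimpleGraph V) : ℕ :=
  sInf {k : ℕ | ∃ v, (G.neighborSet v).ncard = k}

/-- Degeneracy number: the maximum over all subgraphs of the minimum degree. -/
noncomputable def degeneracy {V : Type*} (G : SimpleGraph V) : ℕ :=
  sSup {k : ℕ | ∃ H : G.Subgraph, minDeg H.coe = k}

lemma poly_null {q : Polynomial ℝ} (hq : q ≠ 0) :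
    volume {x : ℝ | Polynomial.eval x q = 0} = 0 :=
  (Polynomial.finite_setOf_isRoot hq).measure_zero _

lemma mvpoly_meas {ι : Type*} [Fintype ι] (P : MvPolynomial ι ℝ) :
    MeasurableSet {x : ι → ℝ | MvPolynomial.eval x P = 0} :=
  (MvPolynomial.continuous_eval P).measurable (measurableSet_singleton 0)

lemma mvpoly_null_fin : ∀ (k : ℕ) (P : MvPolynomial (Fin k) ℝ), P ≠ 0 →
    volume {x : Fin k → ℝ | MvPolynomial.eval x P = 0} = 0 := by
  intro k
  induction k with
  | zero =>
    intro P hP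
    obtain ⟨c, rfl⟩ := MvPolynomial.C_surjective (Fin 0) P
    have hc : c ≠ 0 := fun h => hP (by simp [h])
    convert measure_empty
    · ext x; simp [hc]
    · infer_instance
  | succ k ih =>
    intro P hP
    set Q := MvPolynomial.finSuccEquiv ℝ k P with hQdef
    have hQ : Q ≠ 0 := by
      intro h
      exact hP ((map_eq_zero_iff _ (MvPolynomial.finSuccEquiv ℝ k).injective).mp h)
    obtain ⟨m, hm⟩ : ∃ m, Q.coeff m ≠ 0 := by
      by_contra hc
      push_neg at hc
      exact hQ (Polynomial.ext fun i => by simp [hc i])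
    -- the target set in product form
    set T : Set ((Fin k → ℝ) × ℝ) :=
      {z | MvPolynomial.eval (Fin.cons z.2 z.1) P = 0} with hT
    have hTm : MeasurableSet T := by
      have : Continuous fun z : (Fin k → ℝ) × ℝ => MvPolynomial.eval (Fin.cons z.2 z.1) P := by
        apply (MvPolynomial.continuous_eval P).comp
        apply continuous_pi
        intro i
        refine Fin.cases ?_ ?_ i
        · exact continuous_snd
        · intro j; exact (continuous_apply j).comp continuous_fst
      exact this.measurable (measurableSet_singleton 0)
    have e := (MeasureTheory.volume_preserving_piFinSuccAbove (fun _ : Fin (k+1) => ℝ) 0)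
    have hpre : {x : Fin (k+1) → ℝ | MvPolynomial.eval x P = 0}
        = (MeasurableEquiv.piFinSuccAbove (fun _ : Fin (k+1) => ℝ) 0) ⁻¹' (Prod.swap ⁻¹' T) := by
      ext x
      rw [Set.mem_preimage, Set.mem_preimage]
      have he : (MeasurableEquiv.piFinSuccAbove (fun _ : Fin (k+1) => ℝ) 0) x
          = (x 0, fun j => x (Fin.succAbove 0 j)) := rfl
      rw [he]
      have hx : (Fin.cons (x 0) fun j => x (Fin.succAbove 0 j)) = x := by
        funext j
        refine Fin.cases rfl (fun i => ?_) j
        simp [Fin.zero_succAbove]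
      show MvPolynomial.eval x P = 0 ↔
        MvPolynomial.eval (Fin.cons (x 0) fun j => x (Fin.succAbove 0 j)) P = 0
      rw [hx]
    have hswm : MeasurableSet (Prod.swap ⁻¹' T) := measurable_swap hTm
    rw [hpre, e.measure_preimage hswm.nullMeasurableSet]
    have h1 : (volume : Measure (ℝ × (Fin k → ℝ))) (Prod.swap ⁻¹' T)
        = (volume : Measure ((Fin k → ℝ) × ℝ)) T := by
      rw [Measure.volume_eq_prod, Measure.volume_eq_prod,
        ← Measure.map_apply measurable_swap hTm, Measure.prod_swap]
    rw [h1, Measure.volume_eq_prod, Measure.measure_prod_null hTm]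
    have hae : ∀ᵐ s : Fin k → ℝ, MvPolynomial.eval s (Q.coeff m) ≠ 0 := by
      rw [ae_iff]
      simpa [not_not] using ih _ hm
    filter_upwards [hae] with s hs
    have hq : Q.map (MvPolynomial.eval s) ≠ 0 := by
      intro h0
      apply hs
      have := Polynomial.coeff_map (MvPolynomial.eval s) m (p := Q)
      rw [h0] at this
      simpa using this.symm
    have hsec : Prod.mk s ⁻¹' T = {y : ℝ | Polynomial.eval y (Q.map (MvPolynomial.eval s)) = 0} := by
      ext y
      simp only [Set.mem_preimage, hT, Set.mem_setOf_eq]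
      rw [MvPolynomial.eval_eq_eval_mv_eval']
    show volume (Prod.mk s ⁻¹' T) = 0
    rw [hsec]
    exact poly_null hq

lemma mvpoly_null {ι : Type*} [Fintype ι] (P : MvPolynomial ι ℝ) (hP : P ≠ 0) :
    volume {x : ι → ℝ | MvPolynomial.eval x P = 0} = 0 := by
  classical
  set e := Fintype.equivFin ι with he
  have hmp := MeasureTheory.volume_measurePreserving_piCongrLeft
    (fun _ : Fin (Fintype.card ι) => ℝ) e
  have hren : MvPolynomial.rename e P ≠ 0 :=
    fun h0 => hP ((map_eq_zero_iff _ (MvPolynomial.rename_injective _ e.injective)).mp h0)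
  have hpre : {x : ι → ℝ | MvPolynomial.eval x P = 0}
      = (MeasurableEquiv.piCongrLeft (fun _ : Fin (Fintype.card ι) => ℝ) e) ⁻¹'
        {y : Fin (Fintype.card ι) → ℝ | MvPolynomial.eval y (MvPolynomial.rename e P) = 0} := by
    ext x
    simp only [Set.mem_preimage, Set.mem_setOf_eq, MvPolynomial.eval_rename]
    have hx : ((MeasurableEquiv.piCongrLeft (fun _ : Fin (Fintype.card ι) => ℝ) e) x ∘ e) = x := by
      funext i
      have := MeasurableEquiv.piCongrLeft_apply_apply e (β := fun _ : Fin (Fintype.card ι) => ℝ) x i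
      simpa using this
    rw [hx]
  rw [hpre, hmp.measure_preimage (mvpoly_meas _).nullMeasurableSet]
  exact mvpoly_null_fin _ _ hren

def rowSplit (n p : ℕ) : (Fin p ⊕ (Fin n × Fin p)) ≃ (Fin (n+1) × Fin p) where
  toFun := Sum.elim (fun j => ((0 : Fin (n+1)), j)) (fun q => (q.1.succ, q.2))
  invFun := fun q => Fin.cases (Sum.inl q.2) (fun i => Sum.inr (i, q.2)) q.1
  left_inv := by rintro (j | ⟨i, j⟩) <;> simp
  right_inv := by
    rintro ⟨i, j⟩
    refine Fin.cases ?_ ?_ i <;> simp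

lemma uncurry_mp (n p : ℕ) : MeasurePreserving
    (fun (X : Fin n → Fin p → ℝ) (q : Fin n × Fin p) => X q.1 q.2)
    (volume : Measure (Fin n → Fin p → ℝ)) (volume : Measure (Fin n × Fin p → ℝ)) := by
  induction n with
  | zero =>
    refine ⟨measurable_pi_lambda _ (fun q => isEmptyElim q.1), ?_⟩
    rw [Measure.volume_pi_eq_dirac (ι := Fin 0), Measure.volume_pi_eq_dirac (ι := Fin 0 × Fin p),
      Measure.map_dirac' (measurable_pi_lambda _ (fun q => isEmptyElim q.1))]
    congr 1
    funext q
    exact isEmptyElim q.1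
  | succ n ihn =>
    have mp1 := MeasureTheory.volume_preserving_piFinSuccAbove
      (fun _ : Fin (n+1) => (Fin p → ℝ)) 0
    have mp2 := (MeasurePreserving.id (volume : Measure (Fin p → ℝ))).prod ihn
    have mp3 := MeasureTheory.volume_measurePreserving_sumPiEquivProdPi_symm
      (fun _ : Fin p ⊕ (Fin n × Fin p) => ℝ)
    have mp4 := MeasureTheory.volume_measurePreserving_piCongrLeft
      (fun _ : Fin (n+1) × Fin p => ℝ) (rowSplit n p)
    have comp := mp4.comp (mp3.comp (mp2.comp mp1))
    have hfun : (⇑(MeasurableEquiv.piCongrLeft (fun _ : Fin (n+1) × Fin p => ℝ) (rowSplit n p)) ∘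
        ⇑(MeasurableEquiv.sumPiEquivProdPi (fun _ : Fin p ⊕ (Fin n × Fin p) => ℝ)).symm ∘
        (Prod.map id (fun (X : Fin n → Fin p → ℝ) (q : Fin n × Fin p) => X q.1 q.2)) ∘
        ⇑(MeasurableEquiv.piFinSuccAbove (fun _ : Fin (n+1) => (Fin p → ℝ)) 0))
        = fun (X : Fin (n+1) → Fin p → ℝ) (q : Fin (n+1) × Fin p) => X q.1 q.2 := by
      funext X
      have key : ∀ z : Fin p ⊕ (Fin n × Fin p),
          (⇑(MeasurableEquiv.piCongrLeft (fun _ : Fin (n+1) × Fin p => ℝ) (rowSplit n p)) ∘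
            ⇑(MeasurableEquiv.sumPiEquivProdPi (fun _ : Fin p ⊕ (Fin n × Fin p) => ℝ)).symm ∘
            (Prod.map id (fun (X : Fin n → Fin p → ℝ) (q : Fin n × Fin p) => X q.1 q.2)) ∘
            ⇑(MeasurableEquiv.piFinSuccAbove (fun _ : Fin (n+1) => (Fin p → ℝ)) 0)) X
            ((rowSplit n p) z)
          = X ((rowSplit n p) z).1 ((rowSplit n p) z).2 := by
        intro z
        simp only [Function.comp_apply]
        rw [MeasurableEquiv.piCongrLeft_apply_apply]
        rcases z with j | ⟨i, j⟩
        · rfl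
        · show X ((0 : Fin (n+1)).succAbove i) j = X i.succ j
          rw [Fin.zero_succAbove]
      funext q
      have h2 := key ((rowSplit n p).symm q)
      rwa [Equiv.apply_symm_apply] at h2
    rw [hfun] at comp
    exact comp

lemma matrixpoly_null (n p : ℕ) (P : MvPolynomial (Fin n × Fin p) ℝ) (hP : P ≠ 0) :
    volume {X : Fin n → Fin p → ℝ |
      MvPolynomial.eval (fun q : Fin n × Fin p => X q.1 q.2) P = 0} = 0 := by
  have h2 : {X : Fin n → Fin p → ℝ |
        MvPolynomial.eval (fun q : Fin n × Fin p => X q.1 q.2) P = 0}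
      = (fun (X : Fin n → Fin p → ℝ) (q : Fin n × Fin p) => X q.1 q.2) ⁻¹'
        {y : Fin n × Fin p → ℝ | MvPolynomial.eval y P = 0} := rfl
  rw [h2, (uncurry_mp n p).measure_preimage (mvpoly_meas P).nullMeasurableSet]
  exact mvpoly_null P hP

lemma matrixpoly_ae (n p : ℕ) (P : MvPolynomial (Fin n × Fin p) ℝ) (hP : P ≠ 0) :
    ∀ᵐ X : Fin n → Fin p → ℝ ∂volume,
      MvPolynomial.eval (fun q : Fin n × Fin p => X q.1 q.2) P ≠ 0 := by
  rw [ae_iff]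
  simpa [not_not] using matrixpoly_null n p P hP

/-- the selected-columns square matrix -/
noncomputable def colMat {n p : ℕ} (X : Fin n → Fin p → ℝ) (α : Finset (Fin p))
    (hα : α.card = n) : Matrix (Fin n) (Fin n) ℝ :=
  Matrix.of fun i k => X i ((α.equivFinOfCardEq hα).symm k : Fin p)

lemma det_colMat_ae (n p : ℕ) :
    ∀ᵐ X : Fin n → Fin p → ℝ ∂volume,
      ∀ (α : Finset (Fin p)) (hα : α.card = n), (colMat X α hα).det ≠ 0 := by
  rw [ae_all_iff]
  intro α
  by_cases hα : α.card = n
  · have hiff : ∀ X : Fin n → Fin p → ℝ,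
        (colMat X α hα).det = MvPolynomial.eval (fun q : Fin n × Fin p => X q.1 q.2)
          (Matrix.det (Matrix.of fun i k : Fin n =>
            (MvPolynomial.X (i, ((α.equivFinOfCardEq hα).symm k : Fin p))
              : MvPolynomial (Fin n × Fin p) ℝ))) := by
      intro X
      rw [RingHom.map_det, RingHom.mapMatrix_apply]
      congr 1
      ext i k
      simp [colMat]
    have hP : (Matrix.det (Matrix.of fun i k : Fin n =>
        (MvPolynomial.X (i, ((α.equivFinOfCardEq hα).symm k : Fin p))
          : MvPolynomial (Fin n × Fin p) ℝ))) ≠ 0 := by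
      intro h0
      have h1 := congrArg (MvPolynomial.eval
        (fun q : Fin n × Fin p =>
          if q.2 = ((α.equivFinOfCardEq hα).symm q.1 : Fin p) then (1:ℝ) else 0)) h0
      rw [RingHom.map_det, map_zero] at h1
      have h2 : (Matrix.of fun i k : Fin n =>
          (MvPolynomial.X (i, ((α.equivFinOfCardEq hα).symm k : Fin p))
            : MvPolynomial (Fin n × Fin p) ℝ)).map (MvPolynomial.eval
              (fun q : Fin n × Fin p =>
                if q.2 = ((α.equivFinOfCardEq hα).symm q.1 : Fin p) then (1:ℝ) else 0))
          = (1 : Matrix (Fin n) (Fin n) ℝ) := by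
        ext i k
        have hinj : (((α.equivFinOfCardEq hα).symm k : α) : Fin p)
            = ((α.equivFinOfCardEq hα).symm i : Fin p) ↔ k = i := by
          constructor
          · intro hh
            exact (α.equivFinOfCardEq hα).symm.injective (Subtype.ext hh)
          · rintro rfl; rfl
        simp only [Matrix.map_apply, Matrix.of_apply, MvPolynomial.eval_X, Matrix.one_apply]
        rw [if_congr hinj rfl rfl]
        by_cases hk : k = i
        · simp [hk]
        · simp [hk, Ne.symm hk]
      rw [RingHom.mapMatrix_apply, h2] at h1
      simp at h1
    have := matrixpoly_ae n p _ hP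
    filter_upwards [this] with X hX hα'
    rw [hiff X] at *
    exact hX
  · exact Filter.Eventually.of_forall fun X hα' => absurd hα' hα

/-- For `n ≤ p`, for Lebesgue-almost every real `n × p` matrix `X`,
the matrix `XᵀX` is positive semidefinite of rank `n` with every `n × n` principal
submatrix nonsingular, i.e. `XᵀX` is in general position. -/
theorem ae_transpose_mul_self_inGenPos (n p : ℕ) (h : n ≤ p) :
    ∀ᵐ X : Fin n → Fin p → ℝ ∂volume,
      InGenPos ((Matrix.of X)ᵀ * Matrix.of X) n := by
  unfold InGenPos
  filter_upwards [det_colMat_ae n p] with X hX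
  refine ⟨?_, ?_, ?_⟩
  · have := Matrix.posSemidef_conjTranspose_mul_self (Matrix.of X)
    rwa [Matrix.conjTranspose_eq_transpose_of_trivial] at this
  · rw [Matrix.rank_transpose_mul_self]
    obtain ⟨α₀, -, hα₀⟩ := Finset.exists_subset_card_eq
      (s := (Finset.univ : Finset (Fin p))) (n := n) (by simpa using h)
    have hdet := hX α₀ hα₀
    have hU : IsUnit (colMat X α₀ hα₀) := (Matrix.isUnit_iff_isUnit_det _).mpr hdet.isUnit
    have hr : (colMat X α₀ hα₀).rank = n := by
      rw [Matrix.rank_of_isUnit _ hU, Fintype.card_fin]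
    have hfac : colMat X α₀ hα₀ = (Matrix.of X) * (Matrix.of fun (j : Fin p) (k : Fin n) =>
        if j = ((α₀.equivFinOfCardEq hα₀).symm k : Fin p) then (1:ℝ) else 0) := by
      ext i k
      simp [colMat, Matrix.mul_apply, mul_ite, mul_one, mul_zero]
    have hle : n ≤ (Matrix.of X).rank := by
      have h5 := Matrix.rank_mul_le_left (Matrix.of X)
        (Matrix.of fun (j : Fin p) (k : Fin n) =>
          if j = ((α₀.equivFinOfCardEq hα₀).symm k : Fin p) then (1:ℝ) else 0)
      rw [← hfac, hr] at h5
      exact h5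
    have hge : (Matrix.of X).rank ≤ n := Matrix.rank_le_height _
    omega
  · intro α hα
    have hdet := hX α hα
    have hsub : ((Matrix.of X)ᵀ * Matrix.of X).submatrix (fun i : α => (i : Fin p))
          (fun i : α => (i : Fin p))
        = ((colMat X α hα)ᵀ * colMat X α hα).submatrix (α.equivFinOfCardEq hα)
            (α.equivFinOfCardEq hα) := by
      ext i j
      simp [colMat, Matrix.mul_apply, Matrix.submatrix_apply, Matrix.transpose_apply]
    rw [hsub, Matrix.det_submatrix_equiv_self, Matrix.det_mul, Matrix.det_transpose]
    exact mul_ne_zero hdet hdet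
end

section
/- Let A be a p×p real symmetric positive semidefinite matrix of rank d that is in general position, and suppose d ≤ p − 1. Then there exists a vector u ∈ ℝ^p such that A + u uᵀ is positive semidefinite of rank d + 1 and in general position, and moreover the (p+1)×(p+1) bordered matrix with (1,1)-entry 1, first row (1, uᵀ), first column (1, u)ᵀ and lower-right p×p block A + u uᵀ is positive semidefinite of rank d + 1 and in general position. -/
open Matrix MeasureTheory

/-! The key fact is that for every `(d + 1)`-subset `α` the principal submatrix `A_α` is positive
semidefinite of rank exactly `d`: it has a nonsingular `d × d` principal minor. Hence its kernel is
a line `ℝ w_α`, and `A_α + u_α u_αᵀ` is positive definite as soon as `u_α ⬝ w_α ≠ 0`. Finitely many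
nonzero linear conditions on `u` can be met simultaneously, which makes every `(d + 1)`-minor of
`A + u uᵀ` nonzero. In the bordered matrix, a principal minor through the border index reduces by
a Schur complement against the entry `1` to a `d × d` principal minor of `A`, and every other one
is a principal minor of `A + u uᵀ`. Both ranks are at most `d + 1` because `u uᵀ` has rank one. -/

namespace Matrix

section Field

variable {K m n : Type*} [Field K] [Fintype n]

theorem rank_add_le (A B : Matrix m n K) : (A + B).rank ≤ A.rank + B.rank := by
  rw [rank, rank, rank, mulVecLin_add]
  exact (Submodule.finrank_mono (LinearMap.range_add_le _ _)).trans
    (Submodule.finrank_add_le_finrank_add_finrank _ _)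

theorem card_le_rank_of_det_submatrix_ne_zero {ι : Type*} [Fintype ι] [DecidableEq ι]
    (A : Matrix m n K) (f : ι → m) (g : ι → n) (h : (A.submatrix f g).det ≠ 0) :
    Fintype.card ι ≤ A.rank :=
  (rank_of_det_ne_zero h).symm.le.trans (A.rank_submatrix_le f g)

theorem exists_ker_mulVecLin_eq_span_singleton {M : Matrix n n K}
    (h : M.rank + 1 = Fintype.card n) :
    ∃ w ≠ 0, LinearMap.ker M.mulVecLin = K ∙ w := by
  have hker : Module.finrank K (LinearMap.ker M.mulVecLin) = 1 := by
    have := LinearMap.finrank_range_add_finrank_ker M.mulVecLin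
    rw [Module.finrank_pi] at this
    rw [rank] at h
    omega
  obtain ⟨w, hw, hw0⟩ := Submodule.exists_mem_ne_zero_of_ne_bot fun hbot => by
    rw [(Submodule.finrank_eq_zero (R := K)).2 hbot] at hker
    exact zero_ne_one hker
  exact ⟨w, hw0, eq_span_singleton_of_mem_of_finrank_eq_one hker hw hw0⟩

end Field

theorem det_submatrix_univ_map {R V ι : Type*} [CommRing R] [DecidableEq V] [Fintype ι]
    [DecidableEq ι] (M : Matrix V V R) (f : ι ↪ V) :
    (M.submatrix ((↑) : Finset.univ.map f → V) ((↑) : Finset.univ.map f → V)).det =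
      (M.submatrix f f).det := by
  let e : ι ≃ Finset.univ.map f :=
    (Equiv.ofInjective f f.injective).trans (Equiv.subtypeEquivRight (by simp))
  rw [← det_submatrix_equiv_self e]
  rfl

theorem PosSemidef.posDef_add_vecMulVec {n : Type*} [Fintype n] {M : Matrix n n ℝ}
    (hM : M.PosSemidef) {v w : n → ℝ} (hw : LinearMap.ker M.mulVecLin = ℝ ∙ w)
    (hvw : v ⬝ᵥ w ≠ 0) : (M + vecMulVec v v).PosDef := by
  have hvv : (vecMulVec v v).PosSemidef := by
    simpa using posSemidef_vecMulVec_self_star v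
  refine posDef_iff_dotProduct_mulVec.2 ⟨hM.isHermitian.add hvv.isHermitian, fun x hx => ?_⟩
  have hquad : star x ⬝ᵥ (M + vecMulVec v v) *ᵥ x = x ⬝ᵥ M *ᵥ x + (v ⬝ᵥ x) ^ 2 := by
    simp [add_mulVec, vecMulVec_mulVec, dotProduct_comm x v, sq]
  rw [hquad]
  rcases (by simpa using hM.dotProduct_mulVec_nonneg x : 0 ≤ x ⬝ᵥ M *ᵥ x).lt_or_eq
    with hpos | hzero
  · positivity
  · have hx_ker : x ∈ ℝ ∙ w := by
      rw [← hw, LinearMap.mem_ker, mulVecLin_apply, ← hM.dotProduct_mulVec_zero_iff]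
      simpa using hzero.symm
    obtain ⟨c, rfl⟩ := Submodule.mem_span_singleton.1 hx_ker
    have hc : c ≠ 0 := by rintro rfl; simp at hx
    rw [← hzero, dotProduct_smul, smul_eq_mul]
    positivity

def border {R V : Type*} [CommRing R] (u : V → R) (M : Matrix V V R) :
    Matrix (Unit ⊕ V) (Unit ⊕ V) R :=
  fromBlocks 1 (of fun _ j => u j) (of fun i _ => u i) (M + vecMulVec u u)

section Border

variable {R V : Type*}

theorem border_submatrix_sumMap {ι : Type*} [CommRing R] (u : V → R) (M : Matrix V V R)
    (f : ι → V) :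
    (border u M).submatrix (Sum.map id f) (Sum.map id f) = border (u ∘ f) (M.submatrix f f) := by
  ext (_ | i) (_ | j) <;> simp [border, vecMulVec_apply]

theorem det_border [CommRing R] [Fintype V] [DecidableEq V] (u : V → R) (M : Matrix V V R) :
    (border u M).det = M.det := by
  rw [border, det_fromBlocks_one₁₁]
  congr
  ext i j
  simp [mul_apply, vecMulVec_apply]

theorem fromBlocks_zero_zero_zero_eq [CommRing R] [Fintype V] [DecidableEq V]
    (M : Matrix V V R) :
    fromBlocks (0 : Matrix Unit Unit R) 0 0 M =
      fromRows (0 : Matrix Unit V R) 1 * M * (fromRows (0 : Matrix Unit V R) 1)ᵀ := by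
  rw [fromRows_mul, transpose_fromRows, fromRows_mul_fromCols]
  simp

theorem border_eq_fromBlocks_add_vecMulVec [CommRing R] (u : V → R) (M : Matrix V V R) :
    border u M = fromBlocks 0 0 0 M + vecMulVec (Sum.elim 1 u) (Sum.elim 1 u) := by
  ext (_ | i) (_ | j) <;> simp [border, vecMulVec_apply]

theorem PosSemidef.border [Fintype V] [DecidableEq V] {M : Matrix V V ℝ} (hM : M.PosSemidef)
    (u : V → ℝ) : (border u M).PosSemidef := by
  rw [border_eq_fromBlocks_add_vecMulVec, fromBlocks_zero_zero_zero_eq]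
  refine .add ?_ (by simpa using posSemidef_vecMulVec_self_star (Sum.elim 1 u))
  simpa using hM.mul_mul_conjTranspose_same (fromRows (0 : Matrix Unit V ℝ) (1 : Matrix V V ℝ))

theorem rank_border_le [Field R] [Fintype V] [DecidableEq V] (u : V → R) (M : Matrix V V R) :
    (border u M).rank ≤ M.rank + 1 := by
  rw [border_eq_fromBlocks_add_vecMulVec, fromBlocks_zero_zero_zero_eq]
  exact (rank_add_le _ _).trans (add_le_add
    ((rank_mul_le_left _ _).trans (rank_mul_le_right _ _)) (rank_vecMulVec_le _ _))

theorem det_border_submatrix_ne_zero [CommRing R] [DecidableEq V] {M : Matrix V V R}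
    {u : V → R} {d : ℕ}
    (hM : ∀ β : Finset V, β.card = d → (M.submatrix ((↑) : β → V) ((↑) : β → V)).det ≠ 0)
    (hMu : ∀ α : Finset V, α.card = d + 1 →
      ((M + vecMulVec u u).submatrix ((↑) : α → V) ((↑) : α → V)).det ≠ 0)
    {γ : Finset (Unit ⊕ V)} (hγ : γ.card = d + 1) :
    ((border u M).submatrix ((↑) : γ → Unit ⊕ V) ((↑) : γ → Unit ⊕ V)).det ≠ 0 := by
  set β := γ.toRight
  by_cases hinl : Sum.inl () ∈ γ
  · have hγβ : γ = Finset.univ.map ((Function.Embedding.refl Unit).sumMap (.subtype (· ∈ β))) := by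
      ext (_ | a) <;> simp [β, hinl]
    have hsumMap : ((Function.Embedding.refl Unit).sumMap (.subtype (· ∈ β)) :
        Unit ⊕ β → Unit ⊕ V) = Sum.map id (↑) := rfl
    rw [hγβ] at hγ ⊢
    rw [det_submatrix_univ_map, hsumMap, border_submatrix_sumMap, det_border]
    exact hM β (by simpa [add_comm] using hγ)
  · have hγβ : γ = Finset.univ.map ((Function.Embedding.subtype (· ∈ β)).trans .inr) := by
      ext (_ | a) <;> simp [β, hinl]
    rw [hγβ] at hγ ⊢
    rw [det_submatrix_univ_map]
    exact hMu β (by simpa using hγ)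

end Border

end Matrix

theorem LinearMap.exists_forall_apply_ne_zero {K E ι : Type*} [Field K] [Infinite K]
    [AddCommGroup E] [Module K E] [Finite ι] {f : ι → E →ₗ[K] K} (hf : ∀ i, f i ≠ 0) :
    ∃ x, ∀ i, f i x ≠ 0 := by
  by_contra! h
  obtain ⟨i, hi⟩ := Subspace.exists_eq_top_of_iUnion_eq_univ (p := fun i => LinearMap.ker (f i))
    (Set.eq_univ_of_forall fun x => by simpa using h x)
  exact hf i (LinearMap.ker_eq_top.1 hi)

section GeneralPosition

variable {V : Type*} [Fintype V] [DecidableEq V]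

theorem InGenPos.rank_submatrix {A : Matrix V V ℝ} {d : ℕ} (hA : InGenPos A d)
    {α : Finset V} (hα : α.card = d + 1) : (A.submatrix ((↑) : α → V) ((↑) : α → V)).rank = d := by
  refine le_antisymm (hA.2.1 ▸ A.rank_submatrix_le _ _) ?_
  obtain ⟨β, hβα, hβ⟩ := Finset.exists_subset_card_eq (show d ≤ α.card by omega)
  let ι : β → α := fun x => ⟨x.1, hβα x.2⟩
  simpa [hβ] using
    card_le_rank_of_det_submatrix_ne_zero (A.submatrix ((↑) : α → V) ((↑) : α → V)) ι ι
      (hA.2.2 β hβ)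

theorem inGenPos_of_rank_le {M : Matrix V V ℝ} {k : ℕ} (hM : M.PosSemidef) (hrank : M.rank ≤ k)
    (hk : k ≤ Fintype.card V)
    (hdet : ∀ α : Finset V, α.card = k → (M.submatrix ((↑) : α → V) ((↑) : α → V)).det ≠ 0) :
    InGenPos M k := by
  refine ⟨hM, le_antisymm hrank ?_, hdet⟩
  obtain ⟨α, -, hα⟩ := Finset.exists_subset_card_eq (s := Finset.univ) (by simpa using hk)
  simpa [hα] using card_le_rank_of_det_submatrix_ne_zero M _ _ (hdet α hα)

theorem InGenPos.exists_posDef_submatrix_add_vecMulVec {A : Matrix V V ℝ} {d : ℕ}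
    (hA : InGenPos A d) :
    ∃ u : V → ℝ, ∀ α : Finset V, α.card = d + 1 →
      ((A + vecMulVec u u).submatrix ((↑) : α → V) ((↑) : α → V)).PosDef := by
  have hker (α : {α : Finset V // α.card = d + 1}) : ∃ w ≠ 0,
      LinearMap.ker (A.submatrix ((↑) : α.1 → V) ((↑) : α.1 → V)).mulVecLin = ℝ ∙ w :=
    exists_ker_mulVecLin_eq_span_singleton
      (by rw [InGenPos.rank_submatrix hA α.2, Fintype.card_coe, α.2])
  choose w hw0 hw using hker
  set f := fun α => (dotProductBilin ℝ ℝ).flip (w α) ∘ₗ LinearMap.funLeft ℝ ℝ ((↑) : α.1 → V)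
  have hf (α) : f α ≠ 0 := fun h => by
    obtain ⟨x, hx⟩ := LinearMap.funLeft_surjective_of_injective ℝ ℝ _ Subtype.val_injective (w α)
    exact hw0 α (by simpa [f, hx] using LinearMap.congr_fun h x)
  obtain ⟨u, hu⟩ := LinearMap.exists_forall_apply_ne_zero hf
  exact ⟨u, fun α hα => (hA.1.submatrix _).posDef_add_vecMulVec (hw ⟨α, hα⟩) (hu ⟨α, hα⟩)⟩

theorem InGenPos.border {A : Matrix V V ℝ} {d : ℕ} (hA : InGenPos A d) {u : V → ℝ}
    (hAu : InGenPos (A + vecMulVec u u) (d + 1)) : InGenPos (border u A) (d + 1) :=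
  inGenPos_of_rank_le (hA.1.border u) (hA.2.1 ▸ rank_border_le u A)
    (by
      have := hAu.2.1 ▸ (A + vecMulVec u u).rank_le_card_height
      simp only [Fintype.card_sum, Fintype.card_unique]
      omega)
    fun _ hγ => det_border_submatrix_ne_zero hA.2.2 hAu.2.2 hγ

end GeneralPosition

/-- If `A` is a `p × p` real symmetric positive semidefinite matrix of rank
`d ≤ p - 1` in general position, then there is `u ∈ ℝ^p` such that `A + u uᵀ` is positive
semidefinite of rank `d + 1` in general position, and the bordered `(p+1) × (p+1)` matrix
`[[1, uᵀ], [u, A + u uᵀ]]` is positive semidefinite of rank `d + 1` in general position. -/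
theorem exists_add_vecMulVec_inGenPos {p d : ℕ} (A : Matrix (Fin p) (Fin p) ℝ)
    (hA : InGenPos A d) (hd : d + 1 ≤ p) :
    ∃ u : Fin p → ℝ,
      InGenPos (A + Matrix.vecMulVec u u) (d + 1) ∧
      InGenPos (Matrix.fromBlocks (1 : Matrix Unit Unit ℝ)
        (Matrix.of fun _ j => u j) (Matrix.of fun i _ => u i)
        (A + Matrix.vecMulVec u u)) (d + 1) := by
  obtain ⟨u, hu⟩ := hA.exists_posDef_submatrix_add_vecMulVec
  have hAu : InGenPos (A + vecMulVec u u) (d + 1) :=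
    inGenPos_of_rank_le (hA.1.add (by simpa using posSemidef_vecMulVec_self_star u))
      (hA.2.1 ▸ (rank_add_le _ _).trans (Nat.add_le_add_left (rank_vecMulVec_le u u) _))
      (by simpa using hd) fun α hα => (hu α hα).det_pos.ne'
  exact ⟨u, hAu, hA.border hAu⟩
end

section
/- Let A be a p×p real symmetric positive semidefinite matrix of rank d, let α ⊆ {1,…,p} be a set of indices with |α| = d such that the principal submatrix A[α] is nonsingular, and let β = {1,…,p} \ α and k = p − d. If B is a p×p real symmetric positive semidefinite matrix of rank k such that AB = 0, then the principal submatrix B[β] is nonsingular. -/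
/-!
If `v` is in the kernel of `B[β]`, its extension `u` by zero satisfies `uᵀ B u = 0`, hence `B u = 0`
since `B` is positive semidefinite. Because `B A = 0` and `rank A + rank B = p`, the kernel of `B`
is the column space of `A`, so `u = A w`. The rows of `A` indexed by `α` already have rank
`d = rank A` (they contain the nonsingular `A[α]`), so they cut out the same kernel as `A`;
as `u` vanishes on `α`, `w ∈ ker A` and `u = 0`.
-/

open Matrix Module Function
open scoped ComplexOrder

namespace Matrix

variable {m n ι 𝕜 K R : Type*} [Fintype n]

theorem dotProduct_extend_zero [Fintype m] [NonUnitalNonAssocSemiring R] {e : m → n}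
    (he : Injective e) (w : n → R) (v : m → R) : w ⬝ᵥ extend e v 0 = (w ∘ e) ⬝ᵥ v := by
  classical
  have hout : ∀ i ∉ Finset.univ.map ⟨e, he⟩, w i * extend e v 0 i = 0 := fun i hi => by
    rw [extend_apply' _ _ _ (by simpa using hi), Pi.zero_apply, mul_zero]
  rw [dotProduct, ← Finset.sum_subset (Finset.subset_univ _) fun i _ => hout i, Finset.sum_map]
  exact Finset.sum_congr rfl fun j _ => by simp [he.extend_apply]

theorem mulVec_extend_zero [Fintype ι] [NonUnitalNonAssocSemiring R] (M : Matrix m n R)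
    {e : ι → n} (he : Injective e) (v : ι → R) : M *ᵥ extend e v 0 = M.submatrix id e *ᵥ v :=
  funext fun i => dotProduct_extend_zero he (M i) v

theorem PosSemidef.mulVec_extend_zero_eq_zero [Fintype m] [RCLike 𝕜] {B : Matrix n n 𝕜}
    (hB : B.PosSemidef) {e : m → n} (he : Injective e) {v : m → 𝕜} (hv : B.submatrix e e *ᵥ v = 0) :
    B *ᵥ extend e v 0 = 0 := by
  have hstar : star (extend e v 0) = extend e (star v) 0 := by
    funext i
    rw [Pi.star_apply, apply_extend star]
    congr 1
    exact funext fun _ => star_zero _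
  have hrestrict : (B *ᵥ extend e v 0) ∘ e = B.submatrix e e *ᵥ v := by
    rw [mulVec_extend_zero B he]
    rfl
  rw [← hB.dotProduct_mulVec_zero_iff, dotProduct_comm, hstar, dotProduct_extend_zero he,
    hrestrict, hv, zero_dotProduct]

variable [Field K]

theorem ker_mulVecLin_eq_range_of_mul_eq_zero [Fintype ι] {B : Matrix m n K} {A : Matrix n ι K}
    (hBA : B * A = 0) (hrank : A.rank + B.rank = Fintype.card n) :
    LinearMap.ker B.mulVecLin = LinearMap.range A.mulVecLin := by
  have hle : LinearMap.range A.mulVecLin ≤ LinearMap.ker B.mulVecLin := by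
    rintro _ ⟨w, rfl⟩
    simp [mulVec_mulVec, hBA]
  refine (Submodule.eq_of_le_of_finrank_eq hle ?_).symm
  have := LinearMap.finrank_range_add_finrank_ker B.mulVecLin
  rw [finrank_fintype_fun_eq_card] at this
  change B.rank + _ = _ at this
  change A.rank = _
  omega

theorem ker_mulVecLin_submatrix_id_eq_of_rank_eq {A : Matrix m n K} (r : ι → m)
    (hrank : (A.submatrix r id).rank = A.rank) :
    LinearMap.ker (A.submatrix r id).mulVecLin = LinearMap.ker A.mulVecLin := by
  have hle : LinearMap.ker A.mulVecLin ≤ LinearMap.ker (A.submatrix r id).mulVecLin := by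
    intro w hw
    simp only [LinearMap.mem_ker, mulVecLin_apply] at hw ⊢
    change (A *ᵥ w) ∘ r = 0
    rw [hw]
    rfl
  refine (Submodule.eq_of_le_of_finrank_eq hle ?_).symm
  have h1 := LinearMap.finrank_range_add_finrank_ker A.mulVecLin
  have h2 := LinearMap.finrank_range_add_finrank_ker (A.submatrix r id).mulVecLin
  change A.rank + _ = _ at h1
  change (A.submatrix r id).rank + _ = _ at h2
  omega

theorem eq_zero_of_mem_range_of_comp_eq_zero [Fintype ι] [DecidableEq ι] {A : Matrix m n K}
    {r : ι → m} {c : ι → n} (hdet : (A.submatrix r c).det ≠ 0) (hrank : A.rank = Fintype.card ι)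
    {u : m → K} (hu : u ∈ LinearMap.range A.mulVecLin) (hur : u ∘ r = 0) : u = 0 := by
  obtain ⟨w, rfl⟩ := hu
  have hrows : (A.submatrix r id).rank = A.rank := by
    refine le_antisymm (rank_submatrix_le A r id) ?_
    calc A.rank = (A.submatrix r c).rank := by rw [rank_of_det_ne_zero hdet, hrank]
      _ = ((A.submatrix r id).submatrix id c).rank := rfl
      _ ≤ (A.submatrix r id).rank := rank_submatrix_le _ id c
  have hw : w ∈ LinearMap.ker (A.submatrix r id).mulVecLin := hur
  rw [ker_mulVecLin_submatrix_id_eq_of_rank_eq r hrows] at hw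
  exact hw

end Matrix

/-- Let `A` be a `p × p` real symmetric positive semidefinite matrix of
rank `d`, let `α` be a set of `d` indices with `A[α]` nonsingular, and let `β = αᶜ`. If `B`
is a `p × p` real symmetric positive semidefinite matrix of rank `k = p − d` with `A * B = 0`,
then `B[β]` is nonsingular. -/
theorem det_compl_submatrix_ne_zero {p d : ℕ} (A B : Matrix (Fin p) (Fin p) ℝ)
    (hA : A.PosSemidef) (hrA : A.rank = d)
    (α : Finset (Fin p)) (hα : α.card = d)
    (hdet : (A.submatrix (fun i : α => (i : Fin p)) (fun i : α => (i : Fin p))).det ≠ 0)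
    (hB : B.PosSemidef) (hrB : B.rank = p - d) (hAB : A * B = 0) :
    (B.submatrix (fun i : (αᶜ : Finset (Fin p)) => (i : Fin p))
      (fun i : (αᶜ : Finset (Fin p)) => (i : Fin p))).det ≠ 0 := by
  intro hβ
  obtain ⟨v, hv, hBv⟩ := exists_mulVec_eq_zero_iff.mpr hβ
  set u := extend (fun i : (αᶜ : Finset (Fin p)) => (i : Fin p)) v 0
  have hBu : B *ᵥ u = 0 := hB.mulVec_extend_zero_eq_zero Subtype.val_injective hBv
  have hBA : B * A = 0 := by
    rw [← hB.isHermitian, ← hA.isHermitian, ← conjTranspose_mul, hAB, conjTranspose_zero]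
  have hdp : d ≤ p := hrA ▸ A.rank_le_width
  have hker : LinearMap.ker B.mulVecLin = LinearMap.range A.mulVecLin :=
    ker_mulVecLin_eq_range_of_mul_eq_zero hBA (by simp [hrA, hrB, hdp])
  have huα : u ∘ (fun i : α => (i : Fin p)) = 0 := by
    funext a
    exact extend_apply' _ _ _ fun ⟨b, hb⟩ => Finset.mem_compl.mp b.2 (hb ▸ a.2)
  have hu : u = 0 := eq_zero_of_mem_range_of_comp_eq_zero hdet (by simp [hrA, hα])
    (hker ▸ hBu) huα
  exact hv <| funext fun b => by
    rw [← Subtype.val_injective.extend_apply v 0 b]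
    exact congrFun hu b
end

section
/- Let A be a p×p real symmetric positive semidefinite matrix of rank d that is in general position, and let B be a p×p real symmetric positive semidefinite matrix of rank p − d such that AB = 0. Then B is in general position, i.e., every (p−d)×(p−d) principal submatrix of B is nonsingular. -/
open Matrix MeasureTheory

private lemma sum_extend_by_zero {p : ℕ} (α : Finset (Fin p)) (f : Fin p → ℝ)
    (hf : ∀ j ∉ α, f j = 0) : ∑ j, f j = ∑ a : α, f a := by
  rw [← Finset.sum_subset (Finset.subset_univ α) (fun x _ hx => hf x hx)]
  exact (Finset.sum_attach α f).symm

/-- If `A` is a `p × p` real symmetric positive semidefinite matrix of rank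
`d` in general position and `B` is a `p × p` real symmetric positive semidefinite matrix of
rank `p − d` with `A * B = 0`, then `B` is in general position. -/
theorem inGenPos_of_mul_eq_zero {p d : ℕ} (A B : Matrix (Fin p) (Fin p) ℝ)
    (hA : InGenPos A d) (hB : B.PosSemidef) (hrB : B.rank = p - d) (hAB : A * B = 0) :
    InGenPos B (p - d) := by
  obtain ⟨hApsd, hrA, hgen⟩ := hA
  have hdp : d ≤ p := by
    have h := A.rank_le_card_width
    simpa [hrA] using h
  have hAt : Aᵀ = A := by
    rw [← Matrix.conjTranspose_eq_transpose_of_trivial]; exact hApsd.1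
  have hBt : Bᵀ = B := by
    rw [← Matrix.conjTranspose_eq_transpose_of_trivial]; exact hB.1
  -- finrank of kernel of A
  have hfinA : Module.finrank ℝ (LinearMap.range A.mulVecLin) = d := hrA
  have hsum := LinearMap.finrank_range_add_finrank_ker A.mulVecLin
  simp only [Module.finrank_pi, Fintype.card_fin] at hsum
  have hkerA : Module.finrank ℝ (LinearMap.ker A.mulVecLin) = p - d := by omega
  -- the restriction map ker A → (α → ℝ) for any α of size p - d, and its surjectivity
  have key : ∀ α : Finset (Fin p), α.card = p - d →
      ∀ w : α → ℝ, ∃ z : Fin p → ℝ, A *ᵥ z = 0 ∧ ∀ a : α, z a = w a := by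
    intro α hα w
    let φ : LinearMap.ker A.mulVecLin →ₗ[ℝ] (α → ℝ) :=
      { toFun := fun z a => (z : Fin p → ℝ) a
        map_add' := fun x y => rfl
        map_smul' := fun c x => rfl }
    have hinj : Function.Injective φ := by
      rw [injective_iff_map_eq_zero]
      intro z hz
      have hker : A *ᵥ (z : Fin p → ℝ) = 0 := by
        have := z.2
        rwa [LinearMap.mem_ker, Matrix.mulVecLin_apply] at this
      have hzα : ∀ j (h : j ∈ α), (z : Fin p → ℝ) j = 0 := by
        intro j h
        exact congrFun hz ⟨j, h⟩
      set β : Finset (Fin p) := αᶜ with hβ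
      have hβcard : β.card = d := by
        rw [hβ, Finset.card_compl, hα, Fintype.card_fin]; omega
      set M : Matrix β β ℝ :=
        A.submatrix (fun i : β => (i : Fin p)) (fun i : β => (i : Fin p)) with hM
      have hMdet : M.det ≠ 0 := hgen β hβcard
      set w' : β → ℝ := fun b => (z : Fin p → ℝ) b with hw'
      have hMw : M *ᵥ w' = 0 := by
        funext b
        have h1 : (M *ᵥ w') b = ∑ c : β, A b c * (z : Fin p → ℝ) c := by
          simp [hM, hw', Matrix.mulVec, dotProduct]
        have h2 : ∑ j, A b j * (z : Fin p → ℝ) j = ∑ c : β, A b c * (z : Fin p → ℝ) c :=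
          sum_extend_by_zero β _ (fun j hj => by
            rw [hzα j (by simpa [hβ] using hj), mul_zero])
        have h3 : ∑ j, A b j * (z : Fin p → ℝ) j = (A *ᵥ (z : Fin p → ℝ)) b := rfl
        rw [h1, ← h2, h3, hker]
        rfl
      have hw0 : w' = 0 := by
        have hinv : (M⁻¹ * M) *ᵥ w' = w' := by
          rw [Matrix.nonsing_inv_mul M (isUnit_iff_ne_zero.mpr hMdet), Matrix.one_mulVec]
        rw [← hinv, ← Matrix.mulVec_mulVec, hMw, Matrix.mulVec_zero]
      ext j
      by_cases hj : j ∈ α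
      · exact hzα j hj
      · have : w' ⟨j, by simp [hβ, hj]⟩ = 0 := by rw [hw0]; rfl
        exact this
    have hsurj : Function.Surjective φ := by
      have hfr : Module.finrank ℝ (LinearMap.ker A.mulVecLin) = Module.finrank ℝ (α → ℝ) := by
        rw [hkerA, Module.finrank_pi, Fintype.card_coe, hα]
      exact (LinearMap.injective_iff_surjective_of_finrank_eq_finrank hfr).mp hinj
    obtain ⟨z, hz⟩ := hsurj w
    refine ⟨(z : Fin p → ℝ), ?_, fun a => congrFun hz a⟩
    have := z.2
    rwa [LinearMap.mem_ker, Matrix.mulVecLin_apply] at this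
  -- range A = ker B
  have hBA : B * A = 0 := by
    have h := congrArg Matrix.transpose hAB
    rwa [Matrix.transpose_mul, hAt, hBt, Matrix.transpose_zero] at h
  have hsumB := LinearMap.finrank_range_add_finrank_ker B.mulVecLin
  simp only [Module.finrank_pi, Fintype.card_fin] at hsumB
  have hfinB : Module.finrank ℝ (LinearMap.range B.mulVecLin) = p - d := hrB
  have hkerB : Module.finrank ℝ (LinearMap.ker B.mulVecLin) = d := by omega
  have hrange : LinearMap.range A.mulVecLin = LinearMap.ker B.mulVecLin := by
    apply Submodule.eq_of_le_of_finrank_le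
    · rintro x ⟨y, rfl⟩
      rw [LinearMap.mem_ker]
      simp [Matrix.mulVecLin_apply, Matrix.mulVec_mulVec, hBA]
    · rw [hkerB, hfinA]
  refine ⟨hB, hrB, ?_⟩
  intro α hα hdet
  rw [← Matrix.exists_mulVec_eq_zero_iff] at hdet
  obtain ⟨v, hv, hMv⟩ := hdet
  set x : Fin p → ℝ := fun j => if h : j ∈ α then v ⟨j, h⟩ else 0 with hx
  have hxsupp : ∀ j ∉ α, x j = 0 := fun j hj => dif_neg hj
  have hxα : ∀ a : α, x a = v a := by
    intro a
    simp [hx]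
  -- B *ᵥ x vanishes on α
  have hBxα : ∀ a : α, (B *ᵥ x) a = 0 := by
    intro a
    have h1 : (B *ᵥ x) a = ∑ j, B a j * x j := rfl
    have h2 : ∑ j, B a j * x j = ∑ c : α, B a c * x c :=
      sum_extend_by_zero α _ (fun j hj => by rw [hxsupp j hj, mul_zero])
    have h3 : ∑ c : α, B a c * x c = ∑ c : α, B a c * v c := by
      refine Finset.sum_congr rfl fun c _ => ?_
      rw [hxα c]
    have h4 : ∑ c : α, B a c * v c = (B.submatrix (fun i : α => (i : Fin p))
        (fun i : α => (i : Fin p)) *ᵥ v) a := rfl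
    rw [h1, h2, h3, h4, hMv]
    rfl
  -- quadratic form vanishes
  have hquad : x ⬝ᵥ (B *ᵥ x) = 0 := by
    apply Finset.sum_eq_zero
    intro i _
    by_cases hi : i ∈ α
    · rw [hBxα ⟨i, hi⟩, mul_zero]
    · rw [hxsupp i hi, zero_mul]
  have hBx : B *ᵥ x = 0 := by
    rw [← hB.dotProduct_mulVec_zero_iff]
    simpa using hquad
  -- x is in the range of A
  have hxrange : x ∈ LinearMap.range A.mulVecLin := by
    rw [hrange, LinearMap.mem_ker, Matrix.mulVecLin_apply]
    exact hBx
  obtain ⟨y, hy⟩ := hxrange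
  rw [Matrix.mulVecLin_apply] at hy
  -- find z in ker A matching x on α
  obtain ⟨z, hz0, hzα⟩ := key α hα (fun a => x a)
  have hdot0 : x ⬝ᵥ z = 0 := by
    rw [dotProduct_comm, ← hy, Matrix.dotProduct_mulVec, ← Matrix.mulVec_transpose,
      hAt, hz0]
    simp
  have hdotsq : x ⬝ᵥ z = ∑ i, x i * x i := by
    refine Finset.sum_congr rfl fun i _ => ?_
    by_cases hi : i ∈ α
    · rw [hzα ⟨i, hi⟩]
    · rw [hxsupp i hi, zero_mul, zero_mul]
  have hxz : ∀ i, x i = 0 := by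
    have hsq : ∑ i, x i * x i = 0 := by rw [← hdotsq, hdot0]
    intro i
    have := (Finset.sum_eq_zero_iff_of_nonneg
      (fun j _ => mul_self_nonneg (x j))).mp hsq i (Finset.mem_univ i)
    exact mul_self_eq_zero.mp this
  apply hv
  funext a
  have := hxz a
  rw [hxα a] at this
  exact this
end
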